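/- arXiv:1901.11374 — 3 statements merged into one kernel-verified Lean document; each statement's English description precedes it below -/
import Mathlib

section
/- Let ξ and η be strictly positive probability vectors in ℝ^p, and let h(ξ,η) = log max_{k,l} ((ξ_k/η_k)/(ξ_l/η_l)) denote their Hilbert distance. Then the total variation distance satisfies ‖ξ − η‖_TV ≤ (1/2)(e^{h(ξ,η)} − 1). -/
/-!
Write `r i = ξ i / η i` and let `M` be the largest cross ratio `r k / r l`. Since both vectors
have mass one, some `r l ≤ 1` and some `r k ≥ 1`; dividing by these shows `r i ≤ M` and
`1 / r i ≤ M` for every `i`, hence `|r i - 1| ≤ M - 1`. Summing `|ξ i - η i| = η i |r i - 1|`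
against the weights `η i` gives `∑ |ξ i - η i| ≤ M - 1 = e^h - 1`.
-/

open Finset

/-- `exp` of the Hilbert distance between `ξ` and `η`. -/
noncomputable def crossRatioSup {ι : Type*} (ξ η : ι → ℝ) : ℝ :=
  ⨆ k, ⨆ l, (ξ k / η k) * (η l / ξ l)

lemma abs_sub_le_mul_sub_one {a b M : ℝ} (ha : 0 < a) (hb : 0 < b) (hab : a ≤ b * M)
    (hba : b ≤ a * M) : |a - b| ≤ b * (M - 1) := by
  rw [abs_le]
  constructor <;> nlinarith [sq_nonneg (a - b)]

section

variable {ι : Type*} {ξ η : ι → ℝ}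

lemma mul_le_crossRatioSup [Finite ι] (k l : ι) :
    (ξ k / η k) * (η l / ξ l) ≤ crossRatioSup ξ η :=
  (le_ciSup (f := fun l => (ξ k / η k) * (η l / ξ l)) (Set.finite_range _).bddAbove l).trans
    (le_ciSup (f := fun k => ⨆ l, (ξ k / η k) * (η l / ξ l)) (Set.finite_range _).bddAbove k)

lemma le_mul_crossRatioSup [Finite ι] (hξ : ∀ i, 0 < ξ i) (hη : ∀ i, 0 < η i) {l : ι}
    (hl : ξ l ≤ η l) (i : ι) : ξ i ≤ η i * crossRatioSup ξ η := by
  rw [← div_le_iff₀' (hη i)]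
  exact le_mul_of_one_le_right (div_pos (hξ i) (hη i)).le ((one_le_div (hξ l)).2 hl)
    |>.trans (mul_le_crossRatioSup i l)

lemma le_mul_crossRatioSup_swap [Finite ι] (hξ : ∀ i, 0 < ξ i) (hη : ∀ i, 0 < η i) {k : ι}
    (hk : η k ≤ ξ k) (i : ι) : η i ≤ ξ i * crossRatioSup ξ η := by
  rw [← div_le_iff₀' (hξ i)]
  exact le_mul_of_one_le_left (div_pos (hη i) (hξ i)).le ((one_le_div (hη k)).2 hk)
    |>.trans (mul_le_crossRatioSup k i)

theorem sum_abs_sub_le_crossRatioSup_sub_one [Fintype ι] (hξ : ∀ i, 0 < ξ i)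
    (hη : ∀ i, 0 < η i) (hξ1 : ∑ i, ξ i = 1) (hη1 : ∑ i, η i = 1) :
    ∑ i, |ξ i - η i| ≤ crossRatioSup ξ η - 1 := by
  have hne : (univ : Finset ι).Nonempty := nonempty_of_sum_ne_zero (hξ1 ▸ one_ne_zero)
  obtain ⟨l, -, hl⟩ := exists_le_of_sum_le hne (hξ1.trans hη1.symm).le
  obtain ⟨k, -, hk⟩ := exists_le_of_sum_le hne (hη1.trans hξ1.symm).le
  calc ∑ i, |ξ i - η i| ≤ ∑ i, η i * (crossRatioSup ξ η - 1) :=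
        sum_le_sum fun i _ => abs_sub_le_mul_sub_one (hξ i) (hη i)
          (le_mul_crossRatioSup hξ hη hl i) (le_mul_crossRatioSup_swap hξ hη hk i)
    _ = crossRatioSup ξ η - 1 := by rw [← sum_mul, hη1, one_mul]

end

theorem stmt2_general (p : ℕ) (ξ η : Fin p → ℝ)
    (hξ : ∀ i, 0 < ξ i) (hη : ∀ i, 0 < η i)
    (hξ1 : ∑ i, ξ i = 1) (hη1 : ∑ i, η i = 1) :
    (1 / 2) * ∑ i, |ξ i - η i| ≤
      (1 / 2) * (Real.exp (Real.log (⨆ k, ⨆ l, (ξ k / η k) * (η l / ξ l))) - 1) := by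
  have hTV := sum_abs_sub_le_crossRatioSup_sub_one hξ hη hξ1 hη1
  have hpos : 0 < crossRatioSup ξ η := by
    linarith [sum_nonneg fun i (_ : i ∈ univ) => abs_nonneg (ξ i - η i)]
  rw [← crossRatioSup, Real.exp_log hpos]
  linarith

theorem stmt2 (p : ℕ) [NeZero p] (ξ η : Fin p → ℝ)
    (hξ : ∀ i, 0 < ξ i) (hη : ∀ i, 0 < η i)
    (hξ1 : ∑ i, ξ i = 1) (hη1 : ∑ i, η i = 1) :
    (1 / 2) * ∑ i, |ξ i - η i| ≤
      (1 / 2) * (Real.exp (Real.log (⨆ k, ⨆ l, (ξ k / η k) * (η l / ξ l))) - 1) :=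
  stmt2_general p ξ η hξ hη hξ1 hη1
end

section
/- Let (ξ_k)_{k≥1} be a strictly stationary process of real random variables with E[ξ_1] = −c < 0 satisfying the q-th order M-mixing condition for some q > 4: E|ξ_1|^q < ∞ and E|∑_{k=1}^N (ξ_k − E ξ_k)|^q ≤ C·N^{q/2} for all N ≥ 1 and some constant C > 0. Define η = sup_{m≥1} (∑_{k=1}^m ξ_k)^+. Then E[η] < ∞. -/
/-!
Write `S_N = ∑_{k ≤ N} ξ_k` and `T_N = S_N + N c` for the centred sum. Since `η ≤ ∑_N S_N⁺`,
it suffices that `∑_N E[S_N⁺] < ∞`. Pointwise `(x - b)⁺ ≤ |x|^q b^(1-q)` for `b > 0`, so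
`E[S_N⁺] = E[(T_N - N c)⁺] ≤ E|T_N|^q (N c)^(1-q) ≤ C c^(1-q) N^(1 - q/2)`,
which is summable because `q > 4`.
-/

open MeasureTheory ProbabilityTheory
open scoped ENNReal

lemma sub_le_rpow_abs_mul_rpow (x : ℝ) {b q : ℝ} (hb : 0 < b) (hq : 1 ≤ q) :
    x - b ≤ |x| ^ q * b ^ (1 - q) := by
  rcases le_or_gt x b with hxb | hbx
  · have : 0 ≤ |x| ^ q * b ^ (1 - q) := by positivity
    linarith
  have hx : 0 < x := hb.trans hbx
  have hratio : 1 ≤ (x / b) ^ (q - 1) :=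
    Real.one_le_rpow ((one_le_div hb).2 hbx.le) (by linarith)
  calc x - b ≤ x * (x / b) ^ (q - 1) := by nlinarith
    _ = |x| ^ q * b ^ (1 - q) := by
      rw [abs_of_pos hx, Real.div_rpow hx.le hb.le, show 1 - q = -(q - 1) by ring,
        Real.rpow_neg hb.le, show q = 1 + (q - 1) by ring, Real.rpow_add hx, Real.rpow_one]
      ring_nf

section Markov

variable {Ω : Type*} [MeasurableSpace Ω] {μ : Measure Ω}

lemma lintegral_ofReal_sub_le {X : Ω → ℝ} {b q : ℝ} (hb : 0 < b) (hq : 1 ≤ q)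
    (hX : Integrable (fun ω => |X ω| ^ q) μ) :
    ∫⁻ ω, ENNReal.ofReal (X ω - b) ∂μ ≤
      ENNReal.ofReal (∫ ω, |X ω| ^ q ∂μ) * ENNReal.ofReal (b ^ (1 - q)) :=
  calc ∫⁻ ω, ENNReal.ofReal (X ω - b) ∂μ
      ≤ ∫⁻ ω, ENNReal.ofReal (|X ω| ^ q) * ENNReal.ofReal (b ^ (1 - q)) ∂μ :=
        lintegral_mono fun ω => by
          rw [← ENNReal.ofReal_mul (by positivity)]
          exact ENNReal.ofReal_le_ofReal (sub_le_rpow_abs_mul_rpow (X ω) hb hq)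
    _ = ENNReal.ofReal (∫ ω, |X ω| ^ q ∂μ) * ENNReal.ofReal (b ^ (1 - q)) := by
        rw [lintegral_mul_const' _ _ ENNReal.ofReal_ne_top,
          ofReal_integral_eq_lintegral_ofReal hX (ae_of_all _ fun ω => by positivity)]

lemma lintegral_iSup_le_tsum {f : ℕ → Ω → ℝ≥0∞} (hf : ∀ n, AEMeasurable (f n) μ) :
    ∫⁻ ω, ⨆ n, f n ω ∂μ ≤ ∑' n, ∫⁻ ω, f n ω ∂μ :=
  (lintegral_mono fun _ => iSup_le fun n => ENNReal.le_tsum n).trans_eq (lintegral_tsum hf)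

end Markov

lemma identDistrib_of_map_shift_eq {Ω E : Type*} [MeasurableSpace Ω] [MeasurableSpace E]
    {μ : Measure Ω} {ξ : ℕ → Ω → E} (hmeas : ∀ k, Measurable (ξ k))
    (hstat : ∀ k : ℕ, Measure.map (fun ω => (fun n => ξ (n + k) ω : ℕ → E)) μ =
      Measure.map (fun ω => (fun n => ξ n ω : ℕ → E)) μ) (n k : ℕ) :
    IdentDistrib (ξ (n + k)) (ξ n) μ μ where
  aemeasurable_fst := (hmeas _).aemeasurable
  aemeasurable_snd := (hmeas _).aemeasurable
  map_eq := by
    have h := congrArg (Measure.map (fun f : ℕ → E => f n)) (hstat k)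
    rwa [Measure.map_map (measurable_pi_apply n) (measurable_pi_lambda _ fun _ => hmeas _),
      Measure.map_map (measurable_pi_apply n) (measurable_pi_lambda _ fun _ => hmeas _)] at h

lemma integrable_abs_sum_sub_rpow {Ω : Type*} [MeasurableSpace Ω] {μ : Measure Ω}
    [IsFiniteMeasure μ] {ξ : ℕ → Ω → ℝ} (hmeas : ∀ k, Measurable (ξ k))
    (hstat : ∀ k : ℕ, Measure.map (fun ω => (fun n => ξ (n + k) ω : ℕ → ℝ)) μ =
      Measure.map (fun ω => (fun n => ξ n ω : ℕ → ℝ)) μ)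
    {q : ℝ} (hq : 0 < q) (hmom : Integrable (fun ω => |ξ 1 ω| ^ q) μ) (a : ℝ) (N : ℕ) :
    Integrable (fun ω => |∑ k ∈ Finset.range N, (ξ (k + 1) ω - a)| ^ q) μ := by
  have hq0 : ENNReal.ofReal q ≠ 0 := by rw [Ne, ENNReal.ofReal_eq_zero]; linarith
  have hqr : (ENNReal.ofReal q).toReal = q := ENNReal.toReal_ofReal hq.le
  have hLp : ∀ k, MemLp (ξ (k + 1)) (ENNReal.ofReal q) μ := fun k => by
    rw [add_comm, (identDistrib_of_map_shift_eq hmeas hstat 1 k).memLp_iff,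
      ← integrable_norm_rpow_iff (hmeas 1).aestronglyMeasurable hq0 ENNReal.ofReal_ne_top]
    simpa only [Real.norm_eq_abs, hqr] using hmom
  simpa only [Real.norm_eq_abs, hqr, Pi.sub_apply] using
    (memLp_finsetSum _ fun k _ => (hLp k).sub (memLp_const a)).integrable_norm_rpow
      hq0 ENNReal.ofReal_ne_top

lemma summable_rpow_mul_mul_rpow {c q : ℝ} (hc : 0 ≤ c) (hq : 4 < q) :
    Summable fun n : ℕ => (n : ℝ) ^ (q / 2) * ((n : ℝ) * c) ^ (1 - q) := by
  refine ((Real.summable_nat_rpow.2 (by linarith : 1 - q / 2 < -1)).mul_left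
    (c ^ (1 - q))).congr fun n => ?_
  rw [Real.mul_rpow n.cast_nonneg hc, show 1 - q / 2 = q / 2 + (1 - q) by ring,
    Real.rpow_add' n.cast_nonneg (by linarith)]
  ring

theorem stmt10_general {Ω : Type*} [MeasurableSpace Ω] (μ : Measure Ω) [IsProbabilityMeasure μ]
    (ξ : ℕ → Ω → ℝ) (hmeas : ∀ k, Measurable (ξ k))
    (hstat : ∀ k : ℕ, Measure.map (fun ω => (fun n => ξ (n + k) ω : ℕ → ℝ)) μ =
      Measure.map (fun ω => (fun n => ξ n ω : ℕ → ℝ)) μ)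
    (c : ℝ) (hc : 0 < c)
    (q : ℝ) (hq : 4 < q)
    (hmom : Integrable (fun ω => |ξ 1 ω| ^ q) μ)
    (C : ℝ)
    (hmix : ∀ N : ℕ, 1 ≤ N →
      ∫ ω, |∑ k ∈ Finset.range N, (ξ (k + 1) ω - (-c))| ^ q ∂μ ≤ C * (N : ℝ) ^ (q / 2)) :
    ∫⁻ ω, (⨆ m : ℕ, ENNReal.ofReal (∑ k ∈ Finset.range (m + 1), ξ (k + 1) ω)) ∂μ < ⊤ := by
  have hterm : ∀ m : ℕ, ∫⁻ ω, ENNReal.ofReal (∑ k ∈ Finset.range (m + 1), ξ (k + 1) ω) ∂μ ≤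
      ENNReal.ofReal C * ENNReal.ofReal
        (((m + 1 : ℕ) : ℝ) ^ (q / 2) * (((m + 1 : ℕ) : ℝ) * c) ^ (1 - q)) := fun m => by
    have hcentre : ∀ ω, ∑ k ∈ Finset.range (m + 1), ξ (k + 1) ω =
        ∑ k ∈ Finset.range (m + 1), (ξ (k + 1) ω - (-c)) - ((m + 1 : ℕ) : ℝ) * c := fun ω => by
      simp [Finset.sum_add_distrib]
    simp_rw [hcentre]
    calc _ ≤ _ := lintegral_ofReal_sub_le (by positivity) (by linarith)
          (integrable_abs_sum_sub_rpow hmeas hstat (by linarith) hmom (-c) (m + 1))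
      _ ≤ ENNReal.ofReal (C * ((m + 1 : ℕ) : ℝ) ^ (q / 2)) *
            ENNReal.ofReal ((((m + 1 : ℕ) : ℝ) * c) ^ (1 - q)) := by
          gcongr
          exact hmix (m + 1) m.succ_pos
      _ = _ := by
          rw [ENNReal.ofReal_mul' (by positivity), mul_assoc, ← ENNReal.ofReal_mul (by positivity)]
  calc _ ≤ ∑' m : ℕ, ∫⁻ ω, ENNReal.ofReal (∑ k ∈ Finset.range (m + 1), ξ (k + 1) ω) ∂μ :=
        lintegral_iSup_le_tsum fun m => (ENNReal.measurable_ofReal.comp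
          (Finset.measurable_sum _ fun k _ => hmeas (k + 1))).aemeasurable
    _ ≤ ENNReal.ofReal C * ENNReal.ofReal (∑' m : ℕ,
          ((m + 1 : ℕ) : ℝ) ^ (q / 2) * (((m + 1 : ℕ) : ℝ) * c) ^ (1 - q)) := by
        rw [ENNReal.ofReal_tsum_of_nonneg (fun m => by positivity)
          ((summable_nat_add_iff 1).2 (summable_rpow_mul_mul_rpow hc.le hq)),
          ← ENNReal.tsum_mul_left]
        exact ENNReal.tsum_le_tsum hterm
    _ < ⊤ := ENNReal.mul_lt_top ENNReal.ofReal_lt_top ENNReal.ofReal_lt_top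

theorem stmt10 {Ω : Type*} [MeasurableSpace Ω] (μ : Measure Ω) [IsProbabilityMeasure μ]
    (ξ : ℕ → Ω → ℝ) (hmeas : ∀ k, Measurable (ξ k))
    (hstat : ∀ k : ℕ, Measure.map (fun ω => (fun n => ξ (n + k) ω : ℕ → ℝ)) μ =
      Measure.map (fun ω => (fun n => ξ n ω : ℕ → ℝ)) μ)
    (c : ℝ) (hc : 0 < c) (hmean : ∫ ω, ξ 1 ω ∂μ = -c)
    (q : ℝ) (hq : 4 < q)
    (hmom : Integrable (fun ω => |ξ 1 ω| ^ q) μ)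
    (C : ℝ) (hC : 0 < C)
    (hmix : ∀ N : ℕ, 1 ≤ N →
      ∫ ω, |∑ k ∈ Finset.range N, (ξ (k + 1) ω - (-c))| ^ q ∂μ ≤ C * (N : ℝ) ^ (q / 2)) :
    ∫⁻ ω, (⨆ m : ℕ, ENNReal.ofReal (∑ k ∈ Finset.range (m + 1), ξ (k + 1) ω)) ∂μ < ⊤ :=
  stmt10_general μ ξ hmeas hstat c hc q hq hmom C hmix
end

section
/- Let A be a strictly positive p×p matrix and x, y ∈ ℝ^p strictly positive. Then h(Ax, Ay) ≤ φ(A), where h is the Hilbert projective distance and φ(A) = log max_{i,j,k,l} (A_{ik}/A_{jk})·(A_{jl}/A_{il}) = max_{i,j} h(A^{i·}, A^{j·}) is the projective diameter parameter of A. -/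
/-!
Each ratio `(A x)ₖ / (A x)ₗ = ∑ᵣ Aₖᵣ xᵣ / ∑ᵣ Aₗᵣ xᵣ` is a mediant of the ratios `Aₖᵣ / Aₗᵣ`,
hence at most one of them; the same holds for `(A y)ₗ / (A y)ₖ` with `k` and `l` swapped.
Multiplying the two bounds dominates every term of the supremum defining `h(Ax, Ay)` by a term of
the supremum defining `h(A^{k·}, A^{l·})`.
-/

/-- Hilbert projective distance of two strictly positive vectors. -/
noncomputable def hilbertDist {p : ℕ} (x y : Fin p → ℝ) : ℝ :=
  Real.log (⨆ k, ⨆ l, (x k / y k) * (y l / x l))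

open Finset Matrix

theorem Finset.exists_sum_div_sum_le_div {ι K : Type*} [Field K] [LinearOrder K]
    [IsStrictOrderedRing K] {s : Finset ι} (hs : s.Nonempty) (a : ι → K) {b : ι → K}
    (hb : ∀ i ∈ s, 0 < b i) :
    ∃ i ∈ s, (∑ j ∈ s, a j) / (∑ j ∈ s, b j) ≤ a i / b i := by
  set t := (∑ j ∈ s, a j) / ∑ j ∈ s, b j
  have hsum : ∑ j ∈ s, t * b j ≤ ∑ j ∈ s, a j := by
    rw [← mul_sum, div_mul_cancel₀ _ (sum_pos hb hs).ne']
  obtain ⟨i, hi, h⟩ := exists_le_of_sum_le hs hsum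
  exact ⟨i, hi, (le_div_iff₀ (hb i hi)).2 h⟩

variable {m n K : Type*} [Fintype n] [Field K] [LinearOrder K] [IsStrictOrderedRing K]

theorem Matrix.mulVec_pos [Nonempty n] {A : Matrix m n K} {x : n → K} {i : m}
    (hA : ∀ r, 0 < A i r) (hx : ∀ r, 0 < x r) : 0 < (A *ᵥ x) i :=
  sum_pos (fun r _ => mul_pos (hA r) (hx r)) univ_nonempty

theorem Matrix.exists_mulVec_div_mulVec_le [Nonempty n] (A : Matrix m n K) (i : m) {j : m}
    {x : n → K} (hA : ∀ r, 0 < A j r) (hx : ∀ r, 0 < x r) :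
    ∃ r, (A *ᵥ x) i / (A *ᵥ x) j ≤ A i r / A j r := by
  obtain ⟨r, -, hr⟩ := exists_sum_div_sum_le_div univ_nonempty (fun r => A i r * x r)
    (fun r _ => mul_pos (hA r) (hx r))
  exact ⟨r, by rwa [mul_div_mul_right _ _ (hx r).ne'] at hr⟩

theorem hilbertDist_le_iff {p : ℕ} [NeZero p] {x y : Fin p → ℝ} (hx : ∀ i, 0 < x i)
    (hy : ∀ i, 0 < y i) {c : ℝ} :
    hilbertDist x y ≤ c ↔ ∀ k l, x k / y k * (y l / x l) ≤ Real.exp c := by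
  have hdiag : x 0 / y 0 * (y 0 / x 0) = 1 := by field_simp [(hx 0).ne', (hy 0).ne']
  have hone : 1 ≤ ⨆ k, ⨆ l, x k / y k * (y l / x l) :=
    le_ciSup_of_le (Finite.bddAbove_range _) 0 <|
      le_ciSup_of_le (Finite.bddAbove_range _) 0 hdiag.ge
  rw [hilbertDist, Real.log_le_iff_le_exp (by linarith), ciSup_le_iff (Finite.bddAbove_range _)]
  exact forall_congr' fun k => ciSup_le_iff (Finite.bddAbove_range _)

theorem stmt17 (p : ℕ) [NeZero p] (A : Matrix (Fin p) (Fin p) ℝ)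
    (hA : ∀ i j, 0 < A i j)
    (x y : Fin p → ℝ) (hx : ∀ i, 0 < x i) (hy : ∀ i, 0 < y i) :
    hilbertDist (A.mulVec x) (A.mulVec y) ≤
      ⨆ i, ⨆ j, hilbertDist (fun k => A i k) (fun k => A j k) := by
  have hAx : ∀ i, 0 < (A *ᵥ x) i := fun i => mulVec_pos (hA i) hx
  have hAy : ∀ i, 0 < (A *ᵥ y) i := fun i => mulVec_pos (hA i) hy
  rw [hilbertDist_le_iff hAx hAy]
  intro k l
  obtain ⟨r, hr⟩ := A.exists_mulVec_div_mulVec_le k (hA l) hx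
  obtain ⟨s, hs⟩ := A.exists_mulVec_div_mulVec_le l (hA k) hy
  calc (A *ᵥ x) k / (A *ᵥ y) k * ((A *ᵥ y) l / (A *ᵥ x) l)
      = (A *ᵥ x) k / (A *ᵥ x) l * ((A *ᵥ y) l / (A *ᵥ y) k) := by ring
    _ ≤ A k r / A l r * (A l s / A k s) :=
      mul_le_mul hr hs (div_pos (hAy l) (hAy k)).le (div_pos (hA k r) (hA l r)).le
    _ ≤ Real.exp (hilbertDist (A k) (A l)) := (hilbertDist_le_iff (hA k) (hA l)).1 le_rfl r s
    _ ≤ Real.exp (⨆ i, ⨆ j, hilbertDist (fun k => A i k) (fun k => A j k)) :=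
      Real.exp_le_exp.2 <| le_ciSup_of_le (Finite.bddAbove_range _) k <|
        le_ciSup (Finite.bddAbove_range fun j => hilbertDist (A k) (A j)) l
end
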